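/- arXiv:2102.11495 — 2 statements merged into one kernel-verified Lean document; each statement's English description precedes it below -/
import Mathlib

section
/- Let x be a random variable taking values in a finite set X with probability mass function p_d, and let V be a finite set. An encoder is a conditional probability mass function q(z | x) on Z = V^K given x ∈ X, and a decoder is a family of conditional probability mass functions p_i(x | z_{≤i}) on X given z_{≤i} ∈ V^i, for i = 1, …, K. Define the objective L(q, {p_i}) = (1/K) Σ_{i=1}^K E_{x ~ p_d, z ~ q(·|x)}[−log p_i(x | z_{≤i})]. Suppose the pair (q, {p_i}) minimizes L over all encoder/decoder pairs, and that under the joint distribution of (x, z) induced by p_d and q, for every i ∈ {3, …, K} the coordinates z_{i−1} and z_i are conditionally independent given (x, z_{≤i−2}). Then for every i ∈ {3, …, K}, I(z_i; x | z_{≤i−1}) ≤ I(z_{i−1}; x | z_{≤i−2}). -/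
open Finset

/-- A probability mass function on a finite type. -/
def IsPMF {Ω : Type*} [Fintype Ω] (μ : Ω → ℝ) : Prop :=
  (∀ ω, 0 ≤ μ ω) ∧ ∑ ω, μ ω = 1

/-- The probability that the random variable `f` takes the value `a`. -/
def pr {Ω A : Type*} [Fintype Ω] [DecidableEq A] (μ : Ω → ℝ) (f : Ω → A) (a : A) : ℝ :=
  ∑ ω, if f ω = a then μ ω else 0

/-- Mutual information `I(f; g)`; terms with zero joint probability contribute `0`. -/
noncomputable def mi {Ω A B : Type*} [Fintype Ω] [Fintype A] [Fintype B]
    [DecidableEq A] [DecidableEq B] (μ : Ω → ℝ) (f : Ω → A) (g : Ω → B) : ℝ :=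
  ∑ a : A, ∑ b : B,
    pr μ (fun ω => (f ω, g ω)) (a, b) *
      Real.log (pr μ (fun ω => (f ω, g ω)) (a, b) / (pr μ f a * pr μ g b))

/-- Conditional mutual information `I(f; g | h)`. -/
noncomputable def cmi {Ω A B C : Type*} [Fintype Ω] [Fintype A] [Fintype B] [Fintype C]
    [DecidableEq A] [DecidableEq B] [DecidableEq C]
    (μ : Ω → ℝ) (f : Ω → A) (g : Ω → B) (h : Ω → C) : ℝ :=
  ∑ c : C, ∑ a : A, ∑ b : B,
    pr μ (fun ω => ((f ω, g ω), h ω)) ((a, b), c) *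
      Real.log (pr μ (fun ω => ((f ω, g ω), h ω)) ((a, b), c) * pr μ h c /
        (pr μ (fun ω => (f ω, h ω)) (a, c) * pr μ (fun ω => (g ω, h ω)) (b, c)))

/-- `f` and `g` are conditionally independent given `h`. -/
def CondIndepRV {Ω A B C : Type*} [Fintype Ω] [DecidableEq A] [DecidableEq B] [DecidableEq C]
    (μ : Ω → ℝ) (f : Ω → A) (g : Ω → B) (h : Ω → C) : Prop :=
  ∀ a b c, 0 < pr μ h c →
    pr μ (fun ω => ((f ω, g ω), h ω)) ((a, b), c) * pr μ h c =
      pr μ (fun ω => (f ω, h ω)) (a, c) * pr μ (fun ω => (g ω, h ω)) (b, c)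

/-- Entropy `H(f)`. -/
noncomputable def ent {Ω A : Type*} [Fintype Ω] [Fintype A] [DecidableEq A]
    (μ : Ω → ℝ) (f : Ω → A) : ℝ :=
  -∑ a : A, pr μ f a * Real.log (pr μ f a)

/-- Conditional entropy `H(f | g)`. -/
noncomputable def condEnt {Ω A B : Type*} [Fintype Ω] [Fintype A] [Fintype B]
    [DecidableEq A] [DecidableEq B] (μ : Ω → ℝ) (f : Ω → A) (g : Ω → B) : ℝ :=
  -∑ a : A, ∑ b : B,
    pr μ (fun ω => (f ω, g ω)) (a, b) *
      Real.log (pr μ (fun ω => (f ω, g ω)) (a, b) / pr μ g b)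

/-- The joint pmf of `(x, z)` induced by the data pmf `pd` and the encoder `q`. -/
def joint {X Z : Type*} (pd : X → ℝ) (q : X → Z → ℝ) : X × Z → ℝ :=
  fun ω => pd ω.1 * q ω.1 ω.2

/-- The first `i` coordinates `z_{≤ i}` of a vector `z ∈ V^K`. -/
def trunc {V : Type*} {K : ℕ} (i : ℕ) (h : i ≤ K) (v : Fin K → V) : Fin i → V :=
  fun j => v (Fin.castLE h j)

/-- `- log x` valued in the extended reals, with `- log 0 = ⊤`. -/
noncomputable def negLog (x : ℝ) : EReal := if x = 0 then ⊤ else ((-Real.log x : ℝ) : EReal)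

/-- An encoder is a conditional pmf `q(z | x)`. -/
def IsEncoder {X Z : Type*} [Fintype Z] (q : X → Z → ℝ) : Prop :=
  ∀ a, (∀ v, 0 ≤ q a v) ∧ ∑ v, q a v = 1

/-- A decoder is a family of conditional pmfs `p_i(x | z_{≤ i})`, `i = 1, …, K`. -/
def IsDecoder {X V : Type*} [Fintype X] (K : ℕ) (d : (i : ℕ) → (Fin i → V) → X → ℝ) : Prop :=
  ∀ i, 1 ≤ i → i ≤ K → ∀ zc : Fin i → V, (∀ a, 0 ≤ d i zc a) ∧ ∑ a, d i zc a = 1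

/-- The objective `L(q, {p_i}) = (1/K) ∑_{i=1}^K E[- log p_i(x | z_{≤ i})]`. -/
noncomputable def objL {X V : Type*} [Fintype X] [Fintype V] (K : ℕ)
    (pd : X → ℝ) (q : X → (Fin K → V) → ℝ) (d : (i : ℕ) → (Fin i → V) → X → ℝ) : EReal :=
  ((1 / K : ℝ) : EReal) *
    ∑ i : Fin K, ∑ a : X, ∑ v : Fin K → V,
      ((pd a * q a v : ℝ) : EReal) * negLog (d (i.1 + 1) (trunc (i.1 + 1) i.isLt v) a)

/-!
For a fixed encoder, Gibbs' inequality shows that the objective is minimised by the Bayes decoders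
`p_i(x | z_{≤ i}) = P(x | z_{≤ i})`, with minimum `(1/K) ∑_i H(x | z_{≤ i})`. Swapping the
coordinates `z_{i-1}` and `z_i` of an optimal encoder changes only the term `H(x | z_{≤ i-1})` of
this sum, so optimality gives `H(x | z_{i-1}, z_{≤ i-2}) ≤ H(x | z_i, z_{≤ i-2})`, that is,
`I(z_i; x | z_{≤ i-2}) ≤ I(z_{i-1}; x | z_{≤ i-2})`. Finally, the conditional independence of
`z_{i-1}` and `z_i` given `(x, z_{≤ i-2})`, together with the fact that conditioning does not
increase entropy, gives `I(z_i; x | z_{≤ i-1}) ≤ I(z_i; x | z_{≤ i-2})`.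
-/

section Pr
variable {Ω A B C : Type*} [Fintype Ω] [DecidableEq A] [DecidableEq B] [DecidableEq C]
  {μ : Ω → ℝ}

lemma pr_nonneg (hμ : ∀ ω, 0 ≤ μ ω) (f : Ω → A) (a : A) : 0 ≤ pr μ f a :=
  sum_nonneg fun ω _ => by split_ifs <;> simp [hμ ω]

lemma pr_congr {f : Ω → A} {g : Ω → B} {a : A} {b : B} (h : ∀ ω, f ω = a ↔ g ω = b) :
    pr μ f a = pr μ g b :=
  sum_congr rfl fun ω _ => by simp only [h]

lemma pr_mono (hμ : ∀ ω, 0 ≤ μ ω) {f : Ω → A} {g : Ω → B} {a : A} {b : B}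
    (h : ∀ ω, f ω = a → g ω = b) : pr μ f a ≤ pr μ g b :=
  sum_le_sum fun ω _ => by
    by_cases hf : f ω = a
    · simp [hf, h ω hf]
    · split_ifs <;> simp [hμ ω]

lemma le_pr_apply (hμ : ∀ ω, 0 ≤ μ ω) (f : Ω → A) (ω : Ω) : μ ω ≤ pr μ f (f ω) := by
  have := single_le_sum (f := fun ω' => if f ω' = f ω then μ ω' else 0)
    (fun ω' _ => by split_ifs <;> simp [hμ ω']) (mem_univ ω)
  simpa [pr] using this

lemma pr_apply_pos (hμ : ∀ ω, 0 ≤ μ ω) (f : Ω → A) {ω : Ω} (hω : 0 < μ ω) :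
    0 < pr μ f (f ω) :=
  hω.trans_le (le_pr_apply hμ f ω)

lemma exists_pos_of_pr_pos {f : Ω → A} {a : A} (h : 0 < pr μ f a) :
    ∃ ω, 0 < μ ω ∧ f ω = a := by
  by_contra! hc
  refine h.not_ge (sum_nonpos fun ω _ => ?_)
  split_ifs with hf
  · exact not_lt.1 fun hω => hc ω hω hf
  · exact le_rfl

lemma sum_pr_mul [Fintype A] (f : Ω → A) (φ : A → ℝ) :
    ∑ a, pr μ f a * φ a = ∑ ω, μ ω * φ (f ω) := by
  simp only [pr, sum_mul, ite_mul, zero_mul]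
  rw [sum_comm]
  simp

lemma sum_sum_pr_mul [Fintype A] [Fintype B] (f : Ω → A) (g : Ω → B) (φ : A → B → ℝ) :
    ∑ a, ∑ b, pr μ (fun ω => (f ω, g ω)) (a, b) * φ a b = ∑ ω, μ ω * φ (f ω) (g ω) := by
  rw [← Fintype.sum_prod_type', sum_pr_mul (fun ω => (f ω, g ω)) fun p => φ p.1 p.2]

lemma sum_pr_pair [Fintype A] (f : Ω → A) (h : Ω → C) (c : C) :
    ∑ a, pr μ (fun ω => (f ω, h ω)) (a, c) = pr μ h c := by
  simp only [pr]
  rw [sum_comm]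
  refine sum_congr rfl fun ω _ => ?_
  by_cases hc : h ω = c <;> simp [hc]

lemma pr_comp_equiv {Ω' : Type*} [Fintype Ω'] (e : Ω' ≃ Ω) (f : Ω' → A) (a : A) :
    pr (μ ∘ e) f a = pr μ (f ∘ e.symm) a :=
  Fintype.sum_equiv e _ _ fun ω => by simp

end Pr

lemma sub_le_mul_log_div {p r : ℝ} (hp : 0 < p) (hr : 0 < r) : p - r ≤ p * Real.log (p / r) := by
  have h := mul_le_mul_of_nonneg_left (Real.one_sub_inv_le_log_of_pos (div_pos hp hr)) hp.le
  rwa [inv_div, mul_sub, mul_one, mul_div_cancel₀ _ hp.ne'] at h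

section Entropy
variable {Ω A B C : Type*} [Fintype Ω] [Fintype A] [Fintype B] [Fintype C]
  [DecidableEq A] [DecidableEq B] [DecidableEq C] {μ : Ω → ℝ}

lemma condEnt_eq_sum (f : Ω → A) (h : Ω → C) :
    condEnt μ f h =
      -∑ ω, μ ω * Real.log (pr μ (fun x => (f x, h x)) (f ω, h ω) / pr μ h (h ω)) := by
  rw [condEnt, sum_sum_pr_mul]

lemma cmi_eq_sum (f : Ω → A) (g : Ω → B) (h : Ω → C) :
    cmi μ f g h = ∑ ω, μ ω *
      Real.log (pr μ (fun x => ((f x, g x), h x)) ((f ω, g ω), h ω) * pr μ h (h ω) /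
        (pr μ (fun x => (f x, h x)) (f ω, h ω) * pr μ (fun x => (g x, h x)) (g ω, h ω))) := by
  rw [← sum_pr_mul (fun x => ((f x, g x), h x)) fun p =>
    Real.log (pr μ (fun x => ((f x, g x), h x)) p * pr μ h p.2 /
      (pr μ (fun x => (f x, h x)) (p.1.1, p.2) * pr μ (fun x => (g x, h x)) (p.1.2, p.2))),
    Fintype.sum_prod_type_right]
  simp only [Fintype.sum_prod_type]
  rfl

lemma condEnt_congr_cond {B' : Type*} [Fintype B'] [DecidableEq B'] (f : Ω → A)
    {h₁ : Ω → B} {h₂ : Ω → B'} (hh : ∀ ω ω', h₁ ω = h₁ ω' ↔ h₂ ω = h₂ ω') :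
    condEnt μ f h₁ = condEnt μ f h₂ := by
  simp only [condEnt_eq_sum]
  congr 1
  refine sum_congr rfl fun ω _ => ?_
  have hpair :
      pr μ (fun x => (f x, h₁ x)) (f ω, h₁ ω) = pr μ (fun x => (f x, h₂ x)) (f ω, h₂ ω) :=
    pr_congr fun x => by simp only [Prod.mk.injEq, hh]
  rw [hpair, pr_congr fun x => hh x ω]

lemma cmi_congr_cond {B' : Type*} [Fintype B'] [DecidableEq B'] (f : Ω → A) (g : Ω → B)
    {h₁ : Ω → C} {h₂ : Ω → B'} (hh : ∀ ω ω', h₁ ω = h₁ ω' ↔ h₂ ω = h₂ ω') :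
    cmi μ f g h₁ = cmi μ f g h₂ := by
  simp only [cmi_eq_sum]
  refine sum_congr rfl fun ω _ => ?_
  have hfgh : pr μ (fun x => ((f x, g x), h₁ x)) ((f ω, g ω), h₁ ω) =
      pr μ (fun x => ((f x, g x), h₂ x)) ((f ω, g ω), h₂ ω) :=
    pr_congr fun x => by simp only [Prod.mk.injEq, hh]
  have hfh :
      pr μ (fun x => (f x, h₁ x)) (f ω, h₁ ω) = pr μ (fun x => (f x, h₂ x)) (f ω, h₂ ω) :=
    pr_congr fun x => by simp only [Prod.mk.injEq, hh]
  have hgh :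
      pr μ (fun x => (g x, h₁ x)) (g ω, h₁ ω) = pr μ (fun x => (g x, h₂ x)) (g ω, h₂ ω) :=
    pr_congr fun x => by simp only [Prod.mk.injEq, hh]
  rw [hfgh, hfh, hgh, pr_congr fun x => hh x ω]

lemma condEnt_comp_equiv {Ω' : Type*} [Fintype Ω'] (e : Ω' ≃ Ω) (f : Ω' → A) (h : Ω' → C) :
    condEnt (μ ∘ e) f h = condEnt μ (f ∘ e.symm) (h ∘ e.symm) := by
  simp only [condEnt, pr_comp_equiv]
  rfl

lemma cmi_comm (f : Ω → A) (g : Ω → B) (h : Ω → C) : cmi μ f g h = cmi μ g f h := by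
  simp only [cmi_eq_sum]
  refine sum_congr rfl fun ω _ => ?_
  have hswap : pr μ (fun x => ((f x, g x), h x)) ((f ω, g ω), h ω) =
      pr μ (fun x => ((g x, f x), h x)) ((g ω, f ω), h ω) :=
    pr_congr fun x => by simp only [Prod.mk.injEq]; tauto
  rw [hswap, mul_comm (pr μ (fun x => (f x, h x)) _)]

lemma cmi_eq_condEnt_sub (hμ : ∀ ω, 0 ≤ μ ω) (f : Ω → A) (g : Ω → B) (h : Ω → C) :
    cmi μ f g h = condEnt μ f h - condEnt μ f (fun ω => (g ω, h ω)) := by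
  rw [cmi_eq_sum, condEnt_eq_sum, condEnt_eq_sum, sub_neg_eq_add, neg_add_eq_sub,
    ← sum_sub_distrib]
  refine sum_congr rfl fun ω _ => ?_
  rcases (hμ ω).eq_or_lt with h0 | hω
  · simp [← h0]
  have hassoc : pr μ (fun x => (f x, (g x, h x))) (f ω, (g ω, h ω)) =
      pr μ (fun x => ((f x, g x), h x)) ((f ω, g ω), h ω) :=
    pr_congr fun x => by simp only [Prod.mk.injEq, and_assoc]
  have h₁ := (pr_apply_pos hμ (fun x => ((f x, g x), h x)) hω).ne'
  have h₂ := (pr_apply_pos hμ h hω).ne'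
  have h₃ := (pr_apply_pos hμ (fun x => (f x, h x)) hω).ne'
  have h₄ := (pr_apply_pos hμ (fun x => (g x, h x)) hω).ne'
  rw [hassoc, Real.log_div (mul_ne_zero h₁ h₂) (mul_ne_zero h₃ h₄), Real.log_mul h₁ h₂,
    Real.log_mul h₃ h₄, Real.log_div h₃ h₂, Real.log_div h₁ h₄]
  ring

lemma cmi_eq_zero_of_condIndepRV (hμ : ∀ ω, 0 ≤ μ ω) {f : Ω → A} {g : Ω → B} {h : Ω → C}
    (hci : CondIndepRV μ f g h) : cmi μ f g h = 0 := by
  rw [cmi_eq_sum]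
  refine sum_eq_zero fun ω _ => ?_
  rcases (hμ ω).eq_or_lt with h0 | hω
  · simp [← h0]
  rw [hci _ _ _ (pr_apply_pos hμ h hω), div_self, Real.log_one, mul_zero]
  exact mul_ne_zero (pr_apply_pos hμ _ hω).ne' (pr_apply_pos hμ _ hω).ne'

lemma condEnt_le_sum_mul_neg_log (hμ : ∀ ω, 0 ≤ μ ω) (f : Ω → A) (h : Ω → C) {dec : C → A → ℝ}
    (hdec₀ : ∀ c a, 0 ≤ dec c a) (hdec₁ : ∀ c, ∑ a, dec c a ≤ 1)
    (hpos : ∀ ω, 0 < μ ω → 0 < dec (h ω) (f ω)) :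
    condEnt μ f h ≤ ∑ ω, μ ω * -Real.log (dec (h ω) (f ω)) := by
  rw [← sum_sum_pr_mul f h fun a c => -Real.log (dec c a), condEnt]
  have hterm : ∀ a c, pr μ (fun x => (f x, h x)) (a, c) - pr μ h c * dec c a ≤
      pr μ (fun x => (f x, h x)) (a, c) *
          Real.log (pr μ (fun x => (f x, h x)) (a, c) / pr μ h c) +
        pr μ (fun x => (f x, h x)) (a, c) * -Real.log (dec c a) := by
    intro a c
    rcases (pr_nonneg hμ (fun x => (f x, h x)) (a, c)).eq_or_lt with h0 | hP
    · rw [← h0]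
      simpa using mul_nonneg (pr_nonneg hμ h c) (hdec₀ c a)
    have hQ : 0 < pr μ h c := hP.trans_le (pr_mono hμ fun x hx => congrArg Prod.snd hx)
    obtain ⟨ω, hω, hωac⟩ := exists_pos_of_pr_pos hP
    have hd : 0 < dec c a := by
      obtain ⟨rfl, rfl⟩ := Prod.mk.inj hωac
      exact hpos ω hω
    calc _ ≤ pr μ (fun x => (f x, h x)) (a, c) *
          Real.log (pr μ (fun x => (f x, h x)) (a, c) / (pr μ h c * dec c a)) :=
          sub_le_mul_log_div hP (mul_pos hQ hd)
      _ = _ := by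
          rw [Real.log_div hP.ne' (mul_pos hQ hd).ne', Real.log_mul hQ.ne' hd.ne',
            Real.log_div hP.ne' hQ.ne']
          ring
  have hmass : 0 ≤ ∑ a, ∑ c, (pr μ (fun x => (f x, h x)) (a, c) - pr μ h c * dec c a) := by
    rw [sum_comm]
    simp only [sum_sub_distrib, sum_pr_pair, ← mul_sum]
    rw [sub_nonneg]
    exact sum_le_sum fun c _ => mul_le_of_le_one_right (pr_nonneg hμ h c) (hdec₁ c)
  have := hmass.trans (sum_le_sum fun a _ => sum_le_sum fun c _ => hterm a c)
  simp only [sum_add_distrib] at this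
  linarith

lemma condEnt_pair_le (hμ : ∀ ω, 0 ≤ μ ω) (f : Ω → A) (g : Ω → B) (h : Ω → C) :
    condEnt μ f (fun ω => (g ω, h ω)) ≤ condEnt μ f h := by
  have hgibbs := condEnt_le_sum_mul_neg_log hμ f (fun ω => (g ω, h ω))
    (dec := fun bc a => pr μ (fun x => (f x, h x)) (a, bc.2) / pr μ h bc.2)
    (fun _ _ => div_nonneg (pr_nonneg hμ _ _) (pr_nonneg hμ _ _))
    (fun bc => by rw [← sum_div, sum_pr_pair]; exact div_self_le_one _)
    (fun ω hω => div_pos (pr_apply_pos hμ (fun x => (f x, h x)) hω) (pr_apply_pos hμ h hω))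
  rwa [condEnt_eq_sum f h, ← sum_neg_distrib, ← sum_congr rfl fun ω _ => mul_neg _ _]

lemma cmi_le_of_condIndepRV_of_condEnt_le {B' : Type*} [Fintype B'] [DecidableEq B']
    (hμ : ∀ ω, 0 ≤ μ ω) {x : Ω → A} {y : Ω → B} {z : Ω → B'} {w : Ω → C}
    (hci : CondIndepRV μ y z (fun ω => (x ω, w ω)))
    (hle : condEnt μ x (fun ω => (y ω, w ω)) ≤ condEnt μ x (fun ω => (z ω, w ω))) :
    cmi μ z x (fun ω => (y ω, w ω)) ≤ cmi μ y x w := by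
  have hassoc : condEnt μ z (fun ω => (x ω, (y ω, w ω))) =
      condEnt μ z (fun ω => (y ω, (x ω, w ω))) :=
    condEnt_congr_cond z fun ω ω' => by simp only [Prod.mk.injEq]; tauto
  have hindep :
      condEnt μ z (fun ω => (y ω, (x ω, w ω))) = condEnt μ z (fun ω => (x ω, w ω)) := by
    have h := cmi_eq_condEnt_sub hμ z y (fun ω => (x ω, w ω))
    rw [cmi_comm, cmi_eq_zero_of_condIndepRV hμ hci] at h
    linarith
  have hzxyw := cmi_eq_condEnt_sub hμ z x (fun ω => (y ω, w ω))
  have hxzw := cmi_eq_condEnt_sub hμ x z w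
  have hxyw := cmi_eq_condEnt_sub hμ x y w
  rw [← cmi_comm z x w, cmi_eq_condEnt_sub hμ z x w] at hxzw
  rw [cmi_comm y x w]
  linarith [condEnt_pair_le hμ z y w]

end Entropy

lemma EReal.coe_finset_sum {ι : Type*} (s : Finset ι) (f : ι → ℝ) :
    ((∑ i ∈ s, f i : ℝ) : EReal) = ∑ i ∈ s, (f i : EReal) :=
  map_sum (⟨⟨Real.toEReal, EReal.coe_zero⟩, EReal.coe_add⟩ : ℝ →+ EReal) f s

lemma negLog_nonneg {t : ℝ} (h₀ : 0 ≤ t) (h₁ : t ≤ 1) : 0 ≤ negLog t := by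
  unfold negLog
  split_ifs
  · exact le_top
  · exact EReal.coe_nonneg.2 (neg_nonneg.2 (Real.log_nonpos h₀ h₁))

lemma sum_coe_mul_negLog {Ω : Type*} [Fintype Ω] {μ t : Ω → ℝ}
    (ht : ∀ ω, μ ω ≠ 0 → t ω ≠ 0) :
    ∑ ω, (μ ω : EReal) * negLog (t ω) = ((∑ ω, μ ω * -Real.log (t ω) : ℝ) : EReal) := by
  rw [EReal.coe_finset_sum]
  refine sum_congr rfl fun ω _ => ?_
  by_cases h0 : μ ω = 0
  · simp [h0]
  · rw [negLog, if_neg (ht ω h0), EReal.coe_mul]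

section CrossEntropy
variable {Ω A C : Type*} [Fintype Ω] [Fintype A] [DecidableEq A] [DecidableEq C]
  {μ : Ω → ℝ}

lemma coe_condEnt_le_sum_mul_negLog [Fintype C] (hμ : ∀ ω, 0 ≤ μ ω) (f : Ω → A) (h : Ω → C)
    {dec : C → A → ℝ} (hdec : ∀ c, (∀ a, 0 ≤ dec c a) ∧ ∑ a, dec c a = 1) :
    (condEnt μ f h : EReal) ≤ ∑ ω, (μ ω : EReal) * negLog (dec (h ω) (f ω)) := by
  by_cases hpos : ∀ ω, 0 < μ ω → dec (h ω) (f ω) ≠ 0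
  · rw [sum_coe_mul_negLog fun ω hω => hpos ω ((hμ ω).lt_of_ne' hω), EReal.coe_le_coe_iff]
    exact condEnt_le_sum_mul_neg_log hμ f h (fun c a => (hdec c).1 a) (fun c => (hdec c).2.le)
      fun ω hω => ((hdec _).1 _).lt_of_ne' (hpos ω hω)
  push Not at hpos
  obtain ⟨ω, hω, hzero⟩ := hpos
  have hle : ∀ c a, dec c a ≤ 1 := fun c a =>
    (hdec c).2 ▸ single_le_sum (fun a _ => (hdec c).1 a) (mem_univ a)
  have hterm : ∀ ω', 0 ≤ (μ ω' : EReal) * negLog (dec (h ω') (f ω')) := fun ω' =>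
    mul_nonneg (EReal.coe_nonneg.2 (hμ ω')) (negLog_nonneg ((hdec _).1 _) (hle _ _))
  have htop : (μ ω : EReal) * negLog (dec (h ω) (f ω)) = ⊤ := by
    rw [hzero, negLog, if_pos rfl]
    exact EReal.coe_mul_top_of_pos hω
  exact le_top.trans (htop ▸ single_le_sum (fun ω' _ => hterm ω') (mem_univ ω))

noncomputable def posterior (μ : Ω → ℝ) (f : Ω → A) (h : Ω → C) (c : C) (a : A) : ℝ :=
  if pr μ h c = 0 then (Fintype.card A : ℝ)⁻¹ else pr μ (fun x => (f x, h x)) (a, c) / pr μ h c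

lemma posterior_nonneg (hμ : ∀ ω, 0 ≤ μ ω) (f : Ω → A) (h : Ω → C) (c : C) (a : A) :
    0 ≤ posterior μ f h c a := by
  unfold posterior
  split_ifs
  · positivity
  · exact div_nonneg (pr_nonneg hμ _ _) (pr_nonneg hμ _ _)

lemma sum_posterior [Nonempty A] (f : Ω → A) (h : Ω → C) (c : C) :
    ∑ a, posterior μ f h c a = 1 := by
  unfold posterior
  split_ifs with hc
  · simp
  · rw [← sum_div, sum_pr_pair, div_self hc]

lemma sum_coe_mul_negLog_posterior [Fintype C] (hμ : ∀ ω, 0 ≤ μ ω) (f : Ω → A) (h : Ω → C) :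
    ∑ ω, (μ ω : EReal) * negLog (posterior μ f h (h ω) (f ω)) = condEnt μ f h := by
  have hpost : ∀ ω, 0 < μ ω → posterior μ f h (h ω) (f ω) =
      pr μ (fun x => (f x, h x)) (f ω, h ω) / pr μ h (h ω) := fun ω hω =>
    if_neg (pr_apply_pos hμ h hω).ne'
  have hpos : ∀ ω, 0 < μ ω → 0 < posterior μ f h (h ω) (f ω) := fun ω hω => by
    rw [hpost ω hω]
    exact div_pos (pr_apply_pos hμ (fun x => (f x, h x)) hω) (pr_apply_pos hμ h hω)
  rw [sum_coe_mul_negLog fun ω hω => (hpos ω ((hμ ω).lt_of_ne' hω)).ne', condEnt_eq_sum,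
    ← sum_neg_distrib]
  refine congrArg _ (sum_congr rfl fun ω _ => ?_)
  rcases (hμ ω).eq_or_lt with h0 | hω
  · simp [← h0]
  · rw [hpost ω hω, mul_neg]

end CrossEntropy

section Prefix
variable {V : Type*} {K : ℕ}

lemma trunc_eq_trunc_iff {ℓ : ℕ} (hℓ : ℓ ≤ K) {v v' : Fin K → V} :
    trunc ℓ hℓ v = trunc ℓ hℓ v' ↔ ∀ k : Fin K, (k : ℕ) < ℓ → v k = v' k := by
  simp only [funext_iff, trunc]
  exact ⟨fun H k hk => H ⟨k, hk⟩, fun H j => H _ j.isLt⟩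

lemma trunc_eq_trunc_iff_of_eq_succ {ℓ : ℕ} (hℓ : ℓ ≤ K) (m : Fin K) (hm : ℓ = m + 1)
    {v v' : Fin K → V} :
    trunc ℓ hℓ v = trunc ℓ hℓ v' ↔ (v m, trunc m m.isLt.le v) = (v' m, trunc m m.isLt.le v') := by
  simp only [Prod.mk.injEq, trunc_eq_trunc_iff]
  refine ⟨fun H => ⟨H m (by omega), fun k hk => H k (by omega)⟩, fun ⟨hvm, H⟩ k hk => ?_⟩
  rcases (show (k : ℕ) < m ∨ k = m by omega) with hk | rfl
  · exact H k hk
  · exact hvm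

lemma trunc_comp_perm_eq_iff {ℓ : ℕ} (hℓ : ℓ ≤ K) {σ : Equiv.Perm (Fin K)}
    (hσ : ∀ k, (σ k : ℕ) < ℓ ↔ (k : ℕ) < ℓ) {v v' : Fin K → V} :
    trunc ℓ hℓ (fun k => v (σ k)) = trunc ℓ hℓ (fun k => v' (σ k)) ↔
      trunc ℓ hℓ v = trunc ℓ hℓ v' := by
  simp only [trunc_eq_trunc_iff]
  refine ⟨fun H k hk => ?_, fun H k hk => H (σ k) ((hσ k).2 hk)⟩
  simpa using H (σ.symm k) (by rwa [← hσ, Equiv.apply_symm_apply])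

lemma swap_val_lt_iff {m n : Fin K} (hmn : (n : ℕ) = m + 1) {ℓ : ℕ} (hℓ : ℓ ≠ m + 1)
    (k : Fin K) : (Equiv.swap m n k : ℕ) < ℓ ↔ (k : ℕ) < ℓ := by
  rcases eq_or_ne k m with rfl | hkm
  · rw [Equiv.swap_apply_left]
    omega
  rcases eq_or_ne k n with rfl | hkn
  · rw [Equiv.swap_apply_right]
    omega
  rw [Equiv.swap_apply_of_ne_of_ne hkm hkn]

end Prefix

lemma IsPMF.nonempty {Ω : Type*} [Fintype Ω] {μ : Ω → ℝ} (h : IsPMF μ) : Nonempty Ω := by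
  by_contra hΩ
  rw [not_nonempty_iff] at hΩ
  simpa using h.2

lemma joint_nonneg {X Z : Type*} [Fintype X] [Fintype Z] {pd : X → ℝ} {q : X → Z → ℝ}
    (hpd : IsPMF pd) (hq : IsEncoder q) (ω : X × Z) : 0 ≤ joint pd q ω :=
  mul_nonneg (hpd.1 _) ((hq _).1 _)

lemma condEnt_joint_comp_equiv {X Z C : Type*} [Fintype X] [Fintype Z] [Fintype C]
    [DecidableEq X] [DecidableEq C] (pd : X → ℝ) (q : X → Z → ℝ) (e : Z ≃ Z) (h : X × Z → C) :
    condEnt (joint pd fun a z => q a (e z)) Prod.fst h =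
      condEnt (joint pd q) Prod.fst (fun ω => h (ω.1, e.symm ω.2)) := by
  have hjoint : joint pd (fun a z => q a (e z)) = joint pd q ∘ (Equiv.refl X).prodCongr e := rfl
  rw [hjoint, condEnt_comp_equiv]
  rfl

section Objective
variable {X V : Type*} [Fintype X] [Fintype V] {K : ℕ} {pd : X → ℝ} {q : X → (Fin K → V) → ℝ}

lemma objL_eq_sum (d : (i : ℕ) → (Fin i → V) → X → ℝ) :
    objL K pd q d = ((1 / K : ℝ) : EReal) * ∑ j : Fin K, ∑ ω,
      (joint pd q ω : EReal) * negLog (d (j.1 + 1) (trunc (j.1 + 1) j.isLt ω.2) ω.1) := by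
  simp only [objL, joint, Fintype.sum_prod_type]

variable [DecidableEq X] [DecidableEq V]

noncomputable def prefixCondEntSum (K : ℕ) (μ : X × (Fin K → V) → ℝ) : ℝ :=
  ∑ j : Fin K, condEnt μ Prod.fst (fun ω => trunc (j.1 + 1) j.isLt ω.2)

lemma coe_prefixCondEntSum_le_objL (hμ : ∀ ω, 0 ≤ joint pd q ω)
    {d : (i : ℕ) → (Fin i → V) → X → ℝ} (hd : IsDecoder K d) :
    ((1 / K * prefixCondEntSum K (joint pd q) : ℝ) : EReal) ≤ objL K pd q d := by
  rw [objL_eq_sum, prefixCondEntSum, EReal.coe_mul, EReal.coe_finset_sum]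
  exact mul_le_mul_of_nonneg_left
    (sum_le_sum fun j _ => coe_condEnt_le_sum_mul_negLog hμ _ _ (hd _ (by omega) j.isLt))
    (EReal.coe_nonneg.2 (by positivity))

lemma exists_isDecoder_objL_eq [Nonempty X] (hμ : ∀ ω, 0 ≤ joint pd q ω) :
    ∃ d, IsDecoder K d ∧
      objL K pd q d = ((1 / K * prefixCondEntSum K (joint pd q) : ℝ) : EReal) := by
  refine ⟨fun ℓ zc a => if hℓ : ℓ ≤ K then
    posterior (joint pd q) Prod.fst (fun ω => trunc ℓ hℓ ω.2) zc a else 0, fun ℓ _ hℓ zc => ?_, ?_⟩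
  · simp only [dif_pos hℓ]
    exact ⟨posterior_nonneg hμ _ _ zc, sum_posterior _ _ zc⟩
  · rw [objL_eq_sum, prefixCondEntSum, EReal.coe_mul, EReal.coe_finset_sum]
    refine congrArg _ (sum_congr rfl fun j _ => ?_)
    simp only [dif_pos (show j.1 + 1 ≤ K from j.isLt)]
    exact sum_coe_mul_negLog_posterior hμ _ _

lemma prefixCondEntSum_le_of_forall_objL_le (hpd : IsPMF pd) (hq : IsEncoder q) (hK : 0 < K)
    {d : (i : ℕ) → (Fin i → V) → X → ℝ} (hd : IsDecoder K d)
    (hopt : ∀ (q' : X → (Fin K → V) → ℝ), IsEncoder q' →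
      ∀ (d' : (i : ℕ) → (Fin i → V) → X → ℝ), IsDecoder K d' →
        objL K pd q d ≤ objL K pd q' d')
    {q' : X → (Fin K → V) → ℝ} (hq' : IsEncoder q') :
    prefixCondEntSum K (joint pd q) ≤ prefixCondEntSum K (joint pd q') := by
  have := hpd.nonempty
  obtain ⟨d', hd', hobj⟩ := exists_isDecoder_objL_eq (joint_nonneg hpd hq')
  have hle := (coe_prefixCondEntSum_le_objL (joint_nonneg hpd hq) hd).trans
    ((hopt q' hq' d' hd').trans hobj.le)
  exact le_of_mul_le_mul_left (EReal.coe_le_coe_iff.1 hle) (by positivity)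

lemma condEnt_coord_le_succ_of_minimal
    (hmin : ∀ q' : X → (Fin K → V) → ℝ, IsEncoder q' →
      prefixCondEntSum K (joint pd q) ≤ prefixCondEntSum K (joint pd q'))
    (hq : IsEncoder q) {m n : Fin K} (hmn : (n : ℕ) = m + 1) :
    condEnt (joint pd q) Prod.fst (fun ω => (ω.2 m, trunc m m.isLt.le ω.2)) ≤
      condEnt (joint pd q) Prod.fst (fun ω => (ω.2 n, trunc m m.isLt.le ω.2)) := by
  obtain ⟨e, he⟩ :
      ∃ e : (Fin K → V) ≃ (Fin K → V), ∀ v, e.symm v = fun k => v (Equiv.swap m n k) :=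
    ⟨(Equiv.swap m n).arrowCongr (Equiv.refl V), fun v => rfl⟩
  have hq' : IsEncoder fun a v => q a (e v) :=
    fun a => ⟨fun v => (hq a).1 _, (e.sum_comp (q a)).trans (hq a).2⟩
  have hlevel : ∀ j : Fin K,
      condEnt (joint pd fun a v => q a (e v)) Prod.fst (fun ω => trunc (j.1 + 1) j.isLt ω.2) =
        condEnt (joint pd q) Prod.fst (fun ω => trunc (j.1 + 1) j.isLt (e.symm ω.2)) :=
    fun j => condEnt_joint_comp_equiv pd q e _
  have hoff : ∀ j ≠ m,
      condEnt (joint pd fun a v => q a (e v)) Prod.fst (fun ω => trunc (j.1 + 1) j.isLt ω.2) =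
        condEnt (joint pd q) Prod.fst (fun ω => trunc (j.1 + 1) j.isLt ω.2) := fun j hj =>
    (hlevel j).trans (condEnt_congr_cond _ fun ω ω' => by
      rw [he, he, trunc_comp_perm_eq_iff _
        (swap_val_lt_iff hmn fun h => hj (Fin.ext (by omega)))])
  have hm := hmin _ hq'
  rw [prefixCondEntSum, prefixCondEntSum, ← sub_nonneg, ← sum_sub_distrib,
    Fintype.sum_eq_single m fun j hj => sub_eq_zero.2 (hoff j hj), sub_nonneg, hlevel] at hm
  calc _ = condEnt (joint pd q) Prod.fst (fun ω => trunc (m.1 + 1) m.isLt ω.2) :=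
        condEnt_congr_cond _ fun ω ω' => (trunc_eq_trunc_iff_of_eq_succ _ m rfl).symm
    _ ≤ _ := hm
    _ = _ := condEnt_congr_cond _ fun ω ω' => by
        simp only [trunc_eq_trunc_iff_of_eq_succ _ m rfl, he, Equiv.swap_apply_left,
          Prod.mk.injEq,
          trunc_comp_perm_eq_iff _ (swap_val_lt_iff hmn (by omega : (m : ℕ) ≠ m + 1))]

end Objective

/-- If the encoder/decoder pair `(q, d)` minimizes the objective `L` over all
encoder/decoder pairs, and under the induced joint law `z_{i-1} ⊥ z_i ∣ (x, z_{≤ i-2})` for all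
`i ∈ {3, …, K}`, then `I(z_i; x ∣ z_{≤ i-1}) ≤ I(z_{i-1}; x ∣ z_{≤ i-2})` for all such `i`. -/
theorem optimal_ordered_autoencoder_decreasing_information
    {X V : Type*} [Fintype X] [Fintype V] [DecidableEq X] [DecidableEq V]
    (K : ℕ) (pd : X → ℝ) (hpd : IsPMF pd)
    (q : X → (Fin K → V) → ℝ) (hq : IsEncoder q)
    (d : (i : ℕ) → (Fin i → V) → X → ℝ) (hd : IsDecoder K d)
    (hopt : ∀ (q' : X → (Fin K → V) → ℝ), IsEncoder q' →
      ∀ (d' : (i : ℕ) → (Fin i → V) → X → ℝ), IsDecoder K d' →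
        objL K pd q d ≤ objL K pd q' d')
    (hci : ∀ (i : ℕ) (h3 : 3 ≤ i) (hiK : i ≤ K),
      CondIndepRV (joint pd q)
        (fun ω => ω.2 (⟨i - 2, by omega⟩ : Fin K))
        (fun ω => ω.2 (⟨i - 1, by omega⟩ : Fin K))
        (fun ω => (ω.1, trunc (i - 2) (by omega) ω.2))) :
    ∀ (i : ℕ) (h3 : 3 ≤ i) (hiK : i ≤ K),
      cmi (joint pd q) (fun ω => ω.2 (⟨i - 1, by omega⟩ : Fin K)) Prod.fst
          (fun ω => trunc (i - 1) (by omega) ω.2) ≤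
        cmi (joint pd q) (fun ω => ω.2 (⟨i - 2, by omega⟩ : Fin K)) Prod.fst
          (fun ω => trunc (i - 2) (by omega) ω.2) := by
  intro i h3 hiK
  have hswap := condEnt_coord_le_succ_of_minimal
    (fun q' hq' => prefixCondEntSum_le_of_forall_objL_le hpd hq (by omega) hd hopt hq') hq
    (m := ⟨i - 2, by omega⟩) (n := ⟨i - 1, by omega⟩) (by simp only; omega)
  rw [cmi_congr_cond _ _ fun ω ω' =>
    trunc_eq_trunc_iff_of_eq_succ (ℓ := i - 1) _ (⟨i - 2, by omega⟩ : Fin K) (by simp only; omega)]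
  exact cmi_le_of_condIndepRV_of_condEnt_le (joint_nonneg hpd hq) (hci i h3 hiK) hswap
end

section
/- Let S be a real symmetric D×D matrix with eigenvalues λ_1 ≥ λ_2 ≥ … ≥ λ_D (listed in non-increasing order with multiplicity), and let w_1 ≤ w_2 ≤ … ≤ w_D be real weights in non-decreasing order. Then for every orthonormal basis u_1, …, u_D of R^D, Σ_{k=1}^D w_k · u_kᵀ S u_k ≥ Σ_{k=1}^D w_k λ_k, and equality holds when each u_k is a unit eigenvector of S with eigenvalue λ_k. In particular, the minimum over all orthonormal bases of Σ_{k=1}^D w_k · u_kᵀ S u_k equals Σ_{k=1}^D w_k λ_k. -/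
open Finset Matrix

/-- The (uncentered) second-moment matrix `S = (1/N) ∑ₙ xₙ xₙᵀ` of the data `x`. -/
noncomputable def secondMoment (D N : ℕ) (x : Fin N → (Fin D → ℝ)) :
    Matrix (Fin D) (Fin D) ℝ :=
  (1 / N : ℝ) • ∑ n : Fin N, vecMulVec (x n) (x n)

/-- The residual `y - ∑_{k=1}^{i} ⟨u_k, y⟩ u_k` of `y` after reconstruction with the first `i`
basis vectors (the basis is 0-indexed, so this keeps indices `k < i`). -/
noncomputable def resid (D : ℕ) (u : Fin D → (Fin D → ℝ)) (i : ℕ) (y : Fin D → ℝ) :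
    Fin D → ℝ :=
  y - ∑ k ∈ Finset.univ.filter (fun k : Fin D => (k : ℕ) < i), (u k ⬝ᵥ y) • u k

/-- `u` is an orthonormal basis of `ℝ^D` (w.r.t. the Euclidean inner product). -/
def IsONB (D : ℕ) (u : Fin D → (Fin D → ℝ)) : Prop :=
  ∀ j k, u j ⬝ᵥ u k = if j = k then (1 : ℝ) else 0

/-- The ordered-autoencoder objective
`F(u) = (1/N) ∑ₙ (1/D) ∑_{j=1}^D ‖xₙ - ∑_{k=1}^{j} ⟨u_k, xₙ⟩ u_k‖²`. -/
noncomputable def oaeObj (D N : ℕ) (x : Fin N → (Fin D → ℝ)) (u : Fin D → (Fin D → ℝ)) : ℝ :=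
  (1 / N : ℝ) * ∑ n : Fin N, (1 / D : ℝ) * ∑ j : Fin D,
    resid D u (j.1 + 1) (x n) ⬝ᵥ resid D u (j.1 + 1) (x n)

/- Auxiliary lemmas -/

private lemma onb_dual {D : ℕ} {e : Fin D → (Fin D → ℝ)} (he : IsONB D e) :
    ∀ i j, ∑ k, e k i * e k j = if i = j then (1 : ℝ) else 0 := by
  intro i j
  have h1 : (Matrix.of e) * (Matrix.of e)ᵀ = 1 := by
    ext a b
    simpa [Matrix.mul_apply, Matrix.one_apply, dotProduct] using he a b
  have h2 : (Matrix.of e)ᵀ * (Matrix.of e) = 1 := mul_eq_one_comm.mp h1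
  have := congrFun (congrFun h2 i) j
  simpa [Matrix.mul_apply, Matrix.one_apply] using this

private lemma onb_expand {D : ℕ} {e : Fin D → (Fin D → ℝ)} (he : IsONB D e) (y : Fin D → ℝ) :
    ∑ k, (e k ⬝ᵥ y) • e k = y := by
  funext i
  have : ∑ k, (e k ⬝ᵥ y) * e k i = ∑ j, y j * ∑ k, e k i * e k j := by
    simp only [dotProduct, Finset.sum_mul, Finset.mul_sum]
    rw [Finset.sum_comm]
    congr 1; ext j; congr 1; ext k; ring
  simp only [Finset.sum_apply, Pi.smul_apply, smul_eq_mul]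
  rw [this]
  simp [onb_dual he]

private lemma onb_parseval {D : ℕ} {e : Fin D → (Fin D → ℝ)} (he : IsONB D e) (y : Fin D → ℝ) :
    ∑ k, (e k ⬝ᵥ y)^2 = y ⬝ᵥ y := by
  have : ∑ k, (e k ⬝ᵥ y)^2 = ∑ i, ∑ j, y i * y j * ∑ k, e k i * e k j := by
    simp only [dotProduct, sq, Finset.mul_sum, Finset.sum_mul]
    rw [Finset.sum_comm]
    congr 1; ext i
    rw [Finset.sum_comm]
    congr 1; ext j; congr 1; ext k; ring
  rw [this]
  simp [onb_dual he, dotProduct, sq]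

private lemma dotProduct_sum' {D : ℕ} (y : Fin D → ℝ) (f : Fin D → (Fin D → ℝ)) :
    y ⬝ᵥ (∑ j, f j) = ∑ j, y ⬝ᵥ f j := by
  simp only [dotProduct, Finset.sum_apply, Finset.mul_sum]
  exact Finset.sum_comm

/-- Let `S` be a real symmetric `D × D` matrix whose eigenvalues, in
non-increasing order with multiplicity, are `λ₁ ≥ … ≥ λ_D` (witnessed by an orthonormal basis
`v` of eigenvectors), and let `w₁ ≤ … ≤ w_D` be non-decreasing weights. Then for every
orthonormal basis `u` of `ℝ^D`, `∑ₖ wₖ uₖᵀ S uₖ ≥ ∑ₖ wₖ λₖ`; equality holds when each `uₖ` is a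
unit eigenvector of `S` with eigenvalue `λₖ`; and the minimum over all orthonormal bases of
`∑ₖ wₖ uₖᵀ S uₖ` equals `∑ₖ wₖ λₖ`. -/
theorem weighted_rayleigh_quotient_min
    (D : ℕ) (S : Matrix (Fin D) (Fin D) ℝ) (hS : S.IsSymm)
    (lam : Fin D → ℝ) (hlam : Antitone lam)
    (v : Fin D → (Fin D → ℝ)) (hv : IsONB D v)
    (hev : ∀ k, S *ᵥ v k = lam k • v k)
    (w : Fin D → ℝ) (hw : Monotone w) :
    (∀ u : Fin D → (Fin D → ℝ), IsONB D u →
      ∑ k : Fin D, w k * lam k ≤ ∑ k : Fin D, w k * (u k ⬝ᵥ S *ᵥ u k)) ∧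
    (∀ u : Fin D → (Fin D → ℝ), IsONB D u → (∀ k, S *ᵥ u k = lam k • u k) →
      ∑ k : Fin D, w k * (u k ⬝ᵥ S *ᵥ u k) = ∑ k : Fin D, w k * lam k) ∧
    IsLeast {s : ℝ | ∃ u : Fin D → (Fin D → ℝ), IsONB D u ∧
        s = ∑ k : Fin D, w k * (u k ⬝ᵥ S *ᵥ u k)}
      (∑ k : Fin D, w k * lam k) := by
  -- equality part
  have heq : ∀ u : Fin D → (Fin D → ℝ), IsONB D u → (∀ k, S *ᵥ u k = lam k • u k) →
      ∑ k : Fin D, w k * (u k ⬝ᵥ S *ᵥ u k) = ∑ k : Fin D, w k * lam k := by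
    intro u hu heig
    refine Finset.sum_congr rfl fun k _ => ?_
    rw [heig k, dotProduct_smul, smul_eq_mul, hu k k]
    simp
  -- key Rayleigh expansion
  have key : ∀ y : Fin D → ℝ, y ⬝ᵥ S *ᵥ y = ∑ j, lam j * (v j ⬝ᵥ y)^2 := by
    intro y
    have hz : ∀ j, v j ⬝ᵥ (S *ᵥ y) = lam j * (v j ⬝ᵥ y) := by
      intro j
      rw [dotProduct_mulVec, ← mulVec_transpose, hS.eq, hev j, smul_dotProduct, smul_eq_mul]
    conv_lhs => rw [show S *ᵥ y = ∑ j, (v j ⬝ᵥ (S *ᵥ y)) • v j from (onb_expand hv _).symm]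
    rw [dotProduct_sum']
    refine Finset.sum_congr rfl fun j _ => ?_
    rw [dotProduct_smul, smul_eq_mul, hz j, dotProduct_comm]
    ring
  -- main inequality
  have hineq : ∀ u : Fin D → (Fin D → ℝ), IsONB D u →
      ∑ k : Fin D, w k * lam k ≤ ∑ k : Fin D, w k * (u k ⬝ᵥ S *ᵥ u k) := by
    intro u hu
    -- doubly stochastic matrix of squared coefficients
    set P : Matrix (Fin D) (Fin D) ℝ := Matrix.of (fun k j => (v j ⬝ᵥ u k)^2) with hP
    have hPds : P ∈ doublyStochastic ℝ (Fin D) := by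
      rw [mem_doublyStochastic_iff_sum]
      refine ⟨fun i j => sq_nonneg _, fun k => ?_, fun j => ?_⟩
      · have := onb_parseval hv (u k)
        rw [hu k k] at this
        simpa [hP] using this
      · have : ∑ k, (u k ⬝ᵥ v j)^2 = v j ⬝ᵥ v j := onb_parseval hu (v j)
        rw [hv j j] at this
        simp only [if_pos rfl] at this
        calc ∑ k, P k j = ∑ k, (u k ⬝ᵥ v j)^2 := by
              refine Finset.sum_congr rfl fun k _ => ?_
              simp [hP, dotProduct_comm]
          _ = 1 := this
    obtain ⟨t, ht0, ht1, htP⟩ := exists_eq_sum_perm_of_mem_doublyStochastic hPds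
    have hPentry : ∀ k j, P k j = ∑ σ : Equiv.Perm (Fin D),
        if j = σ k then t σ else 0 := by
      intro k j
      rw [← congrFun (congrFun htP k) j]
      simp [Equiv.Perm.permMatrix, Matrix.sum_apply, Matrix.smul_apply, smul_eq_mul, PEquiv.toMatrix_apply, Equiv.toPEquiv_apply, mul_ite, mul_one, mul_zero, eq_comm]
    have hinner : ∀ k, ∑ j, lam j * P k j = ∑ σ : Equiv.Perm (Fin D), t σ * lam (σ k) := by
      intro k
      simp only [hPentry, Finset.mul_sum]
      rw [Finset.sum_comm]
      refine Finset.sum_congr rfl fun σ _ => ?_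
      simp only [mul_ite, mul_zero]
      rw [Finset.sum_ite_eq' Finset.univ (σ k) (fun j => lam j * t σ)]
      simp [mul_comm]
    -- antivary
    have hA : Antivary w lam := by
      intro i j hij
      rcases le_or_gt i j with h | h
      · exact absurd (hlam h) (not_le.mpr hij)
      · exact hw h.le
    calc ∑ k, w k * lam k = ∑ σ : Equiv.Perm (Fin D), t σ * ∑ k, w k * lam k := by
          rw [← Finset.sum_mul, ht1, one_mul]
      _ ≤ ∑ σ : Equiv.Perm (Fin D), t σ * ∑ k, w k * lam (σ k) := by
          refine Finset.sum_le_sum fun σ _ => mul_le_mul_of_nonneg_left ?_ (ht0 σ)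
          simpa [smul_eq_mul] using hA.sum_smul_le_sum_smul_comp_perm (σ := σ)
      _ = ∑ k, w k * ∑ j, lam j * P k j := by
          simp only [hinner, Finset.mul_sum]
          rw [Finset.sum_comm]
          exact Finset.sum_congr rfl fun _ _ => Finset.sum_congr rfl fun _ _ => by ring
      _ = ∑ k, w k * (u k ⬝ᵥ S *ᵥ u k) := by
          refine Finset.sum_congr rfl fun k _ => ?_
          rw [key (u k)]
          rfl
  exact ⟨hineq, heq, ⟨⟨v, hv, (heq v hv hev).symm⟩, by
    rintro s ⟨u, hu, rfl⟩; exact hineq u hu⟩⟩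
end
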